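/- Fix integers d_l ≥ 2, d_r ≥ 3, d_g ≥ 2, a real β > 0 and ε ∈ [0,1]. If (x₁, x₂) ∈ [0,1]² is a fixed point of the DE map T_ε of the (d_l, d_r, d_g) precoded-rateless code, then U(x₁, x₂; ε) = U⊥( (1−x₁)^{d_r−1}, (1−ε)·(1−x₂)^{d_g−1}; 1−ε ) + ε_Sha − ε, where ε_Sha = 1 − (d_g/β)·(1 − d_l/d_r). -/

import Mathlib

/-- Density-evolution map of the `(d_l, d_r, d_g)` precoded-rateless code
with parameter `β > 0` over BEC(`ε`). -/
noncomputable def DEmap (dl dr dg : ℕ) (β ε : ℝ) (p : ℝ × ℝ) : ℝ × ℝ :=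
  ((1 - (1 - p.1)^(dr-1))^(dl-1) * Real.exp (-β*(1-ε)*(1-p.2)^(dg-1)),
   (1 - (1 - p.1)^(dr-1))^dl * Real.exp (-β*(1-ε)*(1-p.2)^(dg-1)))

/-- Potential function of the `(d_l, d_r, d_g)` precoded-rateless code. -/
noncomputable def potential (dl dr dg : ℕ) (β ε x₁ x₂ : ℝ) : ℝ :=
  (dg:ℝ)*dl/(β*dr) + 1 - ε
    - ((dg:ℝ)*dl/(β*dr)) * (1 - x₁)^dr
    - (1 - ε) * (1 - x₂)^dg
    - ((dg:ℝ)/β) * (1 - (1 - x₁)^(dr-1))^dl * Real.exp (-β*(1-ε)*(1-x₂)^(dg-1))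
    - ((dg:ℝ)*dl/β) * x₁ * (1 - x₁)^(dr-1)
    - (dg:ℝ) * (1 - ε) * x₂ * (1 - x₂)^(dg-1)

/-- Potential function of the dual of the `(d_l, d_r, d_g)` precoded-rateless code. -/
noncomputable def dualPotential (dl dr dg : ℕ) (β ε x₁ x₂ : ℝ) : ℝ :=
  (dg:ℝ)/β - ((dg:ℝ)/β) * (1 - x₁)^dl * Real.exp (-β*x₂)
    - ((dg:ℝ)*dl/(β*dr)) * (1 - (1 - x₁)^(dl-1) * Real.exp (-β*x₂))^dr
    - ε * (1 - (1 - x₁)^dl * Real.exp (-β*x₂))^dg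
    - ((dg:ℝ)*dl/β) * x₁ * (1 - x₁)^(dl-1) * Real.exp (-β*x₂)
    - (dg:ℝ) * x₂ * (1 - x₁)^dl * Real.exp (-β*x₂)

/-!
At a fixed point the exponential terms of both potentials are outputs of the DE map: in `U` the term
`(1 - (1 - x₁)^(d_r-1))^(d_l) e^{…}` equals `x₂`, and at the dual point
`((1 - x₁)^(d_r-1), (1 - ε)(1 - x₂)^(d_g-1))` the three exponential terms of `U⊥` equal `x₂`, `x₁` and `x₂`.
Both potentials then become constants minus the same polynomial `sharedPotential` in `x₁, x₂`,
and the difference of the constants is `ε_Sha - ε`.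
-/

noncomputable def sharedPotential (dl dr dg : ℕ) (β ε x₁ x₂ : ℝ) : ℝ :=
  ((dg:ℝ)*dl/(β*dr)) * (1 - x₁)^dr + (1 - ε) * (1 - x₂)^dg + ((dg:ℝ)/β) * x₂
    + ((dg:ℝ)*dl/β) * x₁ * (1 - x₁)^(dr-1) + (dg:ℝ) * (1 - ε) * x₂ * (1 - x₂)^(dg-1)

section FixedPoint

variable {dl dr dg : ℕ} {β ε x₁ x₂ : ℝ}

theorem DEmap_eq_self_iff :
    DEmap dl dr dg β ε (x₁, x₂) = (x₁, x₂) ↔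
      (1 - (1 - x₁)^(dr-1))^(dl-1) * Real.exp (-β*(1-ε)*(1-x₂)^(dg-1)) = x₁ ∧
      (1 - (1 - x₁)^(dr-1))^dl * Real.exp (-β*(1-ε)*(1-x₂)^(dg-1)) = x₂ := by
  simp only [DEmap, Prod.mk.injEq]

theorem potential_eq_of_fixedPoint
    (h₂ : (1 - (1 - x₁)^(dr-1))^dl * Real.exp (-β*(1-ε)*(1-x₂)^(dg-1)) = x₂) :
    potential dl dr dg β ε x₁ x₂
      = (dg:ℝ)*dl/(β*dr) + 1 - ε - sharedPotential dl dr dg β ε x₁ x₂ := by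
  unfold potential sharedPotential
  linear_combination -((dg:ℝ)/β) * h₂

theorem dualPotential_eq_of_fixedPoint
    (h₁ : (1 - (1 - x₁)^(dr-1))^(dl-1) * Real.exp (-β*(1-ε)*(1-x₂)^(dg-1)) = x₁)
    (h₂ : (1 - (1 - x₁)^(dr-1))^dl * Real.exp (-β*(1-ε)*(1-x₂)^(dg-1)) = x₂) :
    dualPotential dl dr dg β (1-ε) ((1-x₁)^(dr-1)) ((1-ε)*(1-x₂)^(dg-1))
      = (dg:ℝ)/β - sharedPotential dl dr dg β ε x₁ x₂ := by
  unfold dualPotential sharedPotential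
  rw [show -β * ((1-ε)*(1-x₂)^(dg-1)) = -β*(1-ε)*(1-x₂)^(dg-1) by ring, h₁, h₂]
  linear_combination -((dg:ℝ)/β + (dg:ℝ)*(1-ε)*(1-x₂)^(dg-1)) * h₂
    - ((dg:ℝ)*dl/β*(1-x₁)^(dr-1)) * h₁

end FixedPoint

theorem stmt_16 (dl dr dg : ℕ) (β : ℝ) (ε : ℝ) (x₁ x₂ : ℝ)
    (hfix : DEmap dl dr dg β ε (x₁, x₂) = (x₁, x₂)) :
    potential dl dr dg β ε x₁ x₂
      = dualPotential dl dr dg β (1-ε) ((1-x₁)^(dr-1)) ((1-ε)*(1-x₂)^(dg-1))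
        + (1 - ((dg:ℝ)/β) * (1 - (dl:ℝ)/dr)) - ε := by
  obtain ⟨h₁, h₂⟩ := DEmap_eq_self_iff.1 hfix
  rw [potential_eq_of_fixedPoint h₂, dualPotential_eq_of_fixedPoint h₁ h₂]
  ring
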